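/- arXiv:2204.09509 — 6 statements merged into one kernel-verified Lean document; each statement's English description precedes it below -/
import Mathlib

section
/- Let M be a real n×n symmetric positive semidefinite matrix whose entries are all nonnegative and such that every entry of the vector M·1 (where 1 is the all-ones vector) is strictly positive. If the sparsity pattern graph of M is bipartite and connected, then rank(M) ≥ n − 1. -/
/-!
Negating the coordinates of one colour class turns `M` into `D * M * D` with `D = diagonal (±1)`,
a positive semidefinite matrix with nonpositive off-diagonal entries and the same rank and
sparsity pattern. For such a matrix `A`, passing from `x` to `|x|` can only decrease the quadratic
form, so `|x|` is in the kernel whenever `x` is. If moreover `x i = 0`, row `i` of `A *ᵥ |x| = 0` is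
a sum of nonpositive terms `A i j * |x j|`, so `x` vanishes at every neighbour of `i`, hence
everywhere by connectedness. Evaluation at a single vertex is therefore injective on the kernel,
which has dimension at most one.
-/

open Matrix

/-- The sparsity pattern graph of a matrix `M`: vertices `{1,…,n}`, with an edge
between `i ≠ j` whenever `M i j ≠ 0`. -/
def sparsityGraph {n : ℕ} (M : Matrix (Fin n) (Fin n) ℝ) : SimpleGraph (Fin n) :=
  SimpleGraph.fromRel (fun i j => M i j ≠ 0)

theorem SimpleGraph.Reachable.mem_of_adj_closed {V : Type*} {G : SimpleGraph V} {S : Set V}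
    (hS : ∀ u v, G.Adj u v → u ∈ S → v ∈ S) {u v : V} (h : G.Reachable u v) (hu : u ∈ S) :
    v ∈ S := by
  obtain ⟨p⟩ := h
  induction p with
  | nil => exact hu
  | cons hadj _ ih => exact ih (hS _ _ hadj hu)

theorem SimpleGraph.Colorable.exists_alternating_sign {V : Type*} {G : SimpleGraph V}
    (hG : G.Colorable 2) : ∃ s : V → ℝ, (∀ v, s v ≠ 0) ∧ ∀ u v, G.Adj u v → s u * s v = -1 := by
  obtain ⟨C⟩ := hG
  refine ⟨fun v => if C v = 0 then 1 else -1, fun v => by dsimp only; split_ifs <;> norm_num, ?_⟩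
  intro u v huv
  have hne := C.valid huv
  have h01 : ∀ a : Fin 2, a = 0 ∨ a = 1 := by decide
  rcases h01 (C u) with hu | hu <;> rcases h01 (C v) with hv | hv <;> simp_all

theorem Submodule.finrank_le_one_of_forall_apply_eq_zero {K ι : Type*} [Field K] [Fintype ι]
    (V : Submodule K (ι → K)) (i : ι) (hV : ∀ x ∈ V, x i = 0 → x = 0) :
    Module.finrank K V ≤ 1 := by
  have hinj : Function.Injective ((LinearMap.proj i : (ι → K) →ₗ[K] K) ∘ₗ V.subtype) := by
    refine (injective_iff_map_eq_zero _).2 fun x hx => ?_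
    exact Subtype.ext (hV x x.2 hx)
  simpa using LinearMap.finrank_le_finrank_of_injective hinj

namespace Matrix

variable {ι : Type*} [Fintype ι] {A : Matrix ι ι ℝ}

theorem dotProduct_mulVec_abs_le (hA : ∀ i j, i ≠ j → A i j ≤ 0) (x : ι → ℝ) :
    |x| ⬝ᵥ A *ᵥ |x| ≤ x ⬝ᵥ A *ᵥ x := by
  simp only [dotProduct, mulVec, Finset.mul_sum, Pi.abs_apply]
  refine Finset.sum_le_sum fun i _ => Finset.sum_le_sum fun j _ => ?_
  rcases eq_or_ne i j with rfl | hij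
  · linear_combination A i i * abs_mul_abs_self (x i)
  · nlinarith [hA i j hij, abs_mul (x i) (x j), le_abs_self (x i * x j)]

theorem PosSemidef.mulVec_abs_eq_zero (hpsd : A.PosSemidef) (hA : ∀ i j, i ≠ j → A i j ≤ 0)
    {x : ι → ℝ} (hx : A *ᵥ x = 0) : A *ᵥ |x| = 0 := by
  refine (hpsd.dotProduct_mulVec_zero_iff |x|).1 (le_antisymm ?_ (hpsd.dotProduct_mulVec_nonneg _))
  simpa [hx] using dotProduct_mulVec_abs_le hA x

theorem apply_eq_zero_of_mulVec_abs_eq_zero (hA : ∀ i j, i ≠ j → A i j ≤ 0) {x : ι → ℝ}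
    (hx : A *ᵥ |x| = 0) {i j : ι} (hi : x i = 0) (hij : A i j ≠ 0) : x j = 0 := by
  have hterm_nonpos : ∀ k ∈ Finset.univ, A i k * |x k| ≤ 0 := fun k _ => by
    rcases eq_or_ne i k with rfl | hik
    · simp [hi]
    · exact mul_nonpos_of_nonpos_of_nonneg (hA i k hik) (abs_nonneg _)
  have hrow : ∑ k, A i k * |x k| = 0 := by simpa [mulVec, dotProduct] using congrFun hx i
  have hj := (Finset.sum_eq_zero_iff_of_nonpos hterm_nonpos).1 hrow j (Finset.mem_univ j)
  simpa [hij] using hj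

theorem PosSemidef.eq_zero_of_mulVec_eq_zero_of_apply_eq_zero (hpsd : A.PosSemidef)
    (hA : ∀ i j, i ≠ j → A i j ≤ 0) (hconn : (SimpleGraph.fromRel fun i j => A i j ≠ 0).Connected)
    {x : ι → ℝ} (hx : A *ᵥ x = 0) {i : ι} (hi : x i = 0) : x = 0 := by
  have habs := hpsd.mulVec_abs_eq_zero hA hx
  funext j
  refine (hconn.preconnected i j).mem_of_adj_closed (S := {k | x k = 0}) ?_ hi
  rintro k l ⟨-, hkl | hlk⟩ hk
  · exact apply_eq_zero_of_mulVec_abs_eq_zero hA habs hk hkl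
  · refine apply_eq_zero_of_mulVec_abs_eq_zero hA habs hk ?_
    rwa [← hpsd.1.apply, star_trivial] at hlk

theorem PosSemidef.card_sub_one_le_rank_of_offDiag_nonpos (hpsd : A.PosSemidef)
    (hA : ∀ i j, i ≠ j → A i j ≤ 0)
    (hconn : (SimpleGraph.fromRel fun i j => A i j ≠ 0).Connected) :
    Fintype.card ι - 1 ≤ A.rank := by
  obtain ⟨i⟩ := hconn.nonempty
  have hker : Module.finrank ℝ (LinearMap.ker A.mulVecLin) ≤ 1 :=
    Submodule.finrank_le_one_of_forall_apply_eq_zero _ i fun x hx hi =>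
      hpsd.eq_zero_of_mulVec_eq_zero_of_apply_eq_zero hA hconn hx hi
  have hrank_nullity := LinearMap.finrank_range_add_finrank_ker A.mulVecLin
  rw [Module.finrank_fintype_fun_eq_card] at hrank_nullity
  change _ ≤ Module.finrank ℝ (LinearMap.range A.mulVecLin)
  omega

theorem PosSemidef.card_sub_one_le_rank_of_nonneg {M : Matrix ι ι ℝ} (hpsd : M.PosSemidef)
    (hM : ∀ i j, 0 ≤ M i j) {s : ι → ℝ} (hs : ∀ i, s i ≠ 0)
    (hsM : ∀ i j, i ≠ j → M i j ≠ 0 → s i * s j = -1)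
    (hconn : (SimpleGraph.fromRel fun i j => M i j ≠ 0).Connected) :
    Fintype.card ι - 1 ≤ M.rank := by
  classical
  set D : Matrix ι ι ℝ := diagonal s
  have hentry : ∀ i j, (D * M * Dᴴ) i j = s i * M i j * s j := by
    simp [D, diagonal_mul, mul_diagonal]
  have hdet : IsUnit D.det := by simpa [D, Finset.prod_ne_zero_iff] using hs
  have hrank : (D * M * Dᴴ).rank = M.rank := by
    rw [rank_mul_eq_left_of_isUnit_det _ _ (by simpa using hdet),
      rank_mul_eq_right_of_isUnit_det _ _ hdet]
  have hgraph : (SimpleGraph.fromRel fun i j => (D * M * Dᴴ) i j ≠ 0) =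
      SimpleGraph.fromRel fun i j => M i j ≠ 0 := by
    simp only [hentry, mul_ne_zero_iff, hs, ne_eq, not_false_eq_true, and_true, true_and]
  have hZ : ∀ i j, i ≠ j → (D * M * Dᴴ) i j ≤ 0 := by
    intro i j hij
    rw [hentry]
    by_cases hMij : M i j = 0
    · simp [hMij]
    · linear_combination M i j * hsM i j hij hMij + hM i j
  exact hrank ▸ (hpsd.mul_mul_conjTranspose_same D).card_sub_one_le_rank_of_offDiag_nonpos hZ
    (hgraph ▸ hconn)

end Matrix

theorem rank_ge_of_bipartite_connected_general (n : ℕ) (M : Matrix (Fin n) (Fin n) ℝ)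
    (hpsd : M.PosSemidef)
    (hnonneg : ∀ i j, 0 ≤ M i j)
    (hbip : (sparsityGraph M).Colorable 2)
    (hconn : (sparsityGraph M).Connected) :
    n - 1 ≤ M.rank := by
  obtain ⟨s, hs, hs_adj⟩ := hbip.exists_alternating_sign
  simpa using hpsd.card_sub_one_le_rank_of_nonneg hnonneg hs
    (fun i j hij hMij => hs_adj i j ⟨hij, Or.inl hMij⟩) hconn

/-- If `M` is a nonnegative positive semidefinite matrix with `M · 1 > 0`, and the
sparsity pattern graph of `M` is bipartite (2-colorable) and connected, then
`rank M ≥ n - 1`. -/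
theorem rank_ge_of_bipartite_connected (n : ℕ) (M : Matrix (Fin n) (Fin n) ℝ)
    (hpsd : M.PosSemidef)
    (hnonneg : ∀ i j, 0 ≤ M i j)
    (hrowsum : ∀ i, 0 < ∑ j, M i j)
    (hbip : (sparsityGraph M).Colorable 2)
    (hconn : (sparsityGraph M).Connected) :
    n - 1 ≤ M.rank :=
  rank_ge_of_bipartite_connected_general n M hpsd hnonneg hbip hconn
end

section
/- Consider a QCQP in which all off-diagonal entries of every matrix Q^0, Q^1, …, Q^m are nonpositive (a nonpositive off-diagonal QCQP). Suppose that: (i) the sets of optimal solutions of (P) and (D) are nonempty; (ii) the feasible set of (P) is bounded or the set of optimal solutions of (D) is bounded; (iii) the aggregated sparsity pattern graph G(V,E) of Q^0,…,Q^m is connected; and (iv) Q^0_{ij} < 0 for all edges {i,j} ∈ E. Then the SDP relaxation is exact: the optimal value of (P) equals the optimal value of the QCQP, i.e., equals the infimum of xᵀQ^0x over all x ∈ R^n satisfying xᵀQ^px ≤ b_p for p = 1,…,m. -/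
open Matrix

/-- `X` is feasible for the primal SDP (P). -/
def PrimalFeasible {n m : ℕ} (Q : Fin m → Matrix (Fin n) (Fin n) ℝ) (b : Fin m → ℝ)
    (X : Matrix (Fin n) (Fin n) ℝ) : Prop :=
  X.PosSemidef ∧ ∀ p, (Q p * X).trace ≤ b p

/-- `y` is feasible for the dual SDP (D). -/
def DualFeasible {n m : ℕ} (Q0 : Matrix (Fin n) (Fin n) ℝ)
    (Q : Fin m → Matrix (Fin n) (Fin n) ℝ) (y : Fin m → ℝ) : Prop :=
  (∀ p, 0 ≤ y p) ∧ (Q0 + ∑ p, y p • Q p).PosSemidef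

/-- `X` is an optimal solution of the primal SDP (P). -/
def PrimalOptimal {n m : ℕ} (Q0 : Matrix (Fin n) (Fin n) ℝ)
    (Q : Fin m → Matrix (Fin n) (Fin n) ℝ) (b : Fin m → ℝ)
    (X : Matrix (Fin n) (Fin n) ℝ) : Prop :=
  PrimalFeasible Q b X ∧ ∀ X', PrimalFeasible Q b X' → (Q0 * X).trace ≤ (Q0 * X').trace

/-- `y` is an optimal solution of the dual SDP (D). -/
def DualOptimal {n m : ℕ} (Q0 : Matrix (Fin n) (Fin n) ℝ)
    (Q : Fin m → Matrix (Fin n) (Fin n) ℝ) (b : Fin m → ℝ) (y : Fin m → ℝ) : Prop :=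
  DualFeasible Q0 Q y ∧ ∀ y', DualFeasible Q0 Q y' → -(b ⬝ᵥ y') ≤ -(b ⬝ᵥ y)

/-- The aggregated sparsity pattern graph of `Q^0, Q^1, …, Q^m`. -/
def aggSparsityGraph {n m : ℕ} (Q0 : Matrix (Fin n) (Fin n) ℝ)
    (Q : Fin m → Matrix (Fin n) (Fin n) ℝ) : SimpleGraph (Fin n) :=
  SimpleGraph.fromRel (fun i j => Q0 i j ≠ 0 ∨ ∃ p, Q p i j ≠ 0)

/-!
For `X ⪰ 0` the 2×2 principal minors give `X i j ≤ √(X i i) √(X j j)`. Since every `Q^p` has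
nonpositive off-diagonal entries, the vector `x i = √(X i i)` satisfies
`xᵀ Q^p x ≤ tr (Q^p X)` for `p = 0, …, m`: it is feasible for the QCQP whenever `X` is feasible
for (P), with objective value at most that of `X`. Conversely every QCQP-feasible `x` yields the
(P)-feasible `x xᵀ` with the same value, so the two optimal values coincide.
-/

namespace Matrix

variable {ι : Type*}

theorem trace_mul_vecMulVec_self [Fintype ι] {R : Type*} [CommSemiring R] (Q : Matrix ι ι R)
    (x : ι → R) :
    (Q * vecMulVec x x).trace = x ⬝ᵥ Q *ᵥ x := by
  rw [mul_vecMulVec, trace_vecMulVec, dotProduct_comm]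

theorem posSemidef_vecMulVec_self [Fintype ι] (x : ι → ℝ) : (vecMulVec x x).PosSemidef := by
  simpa using posSemidef_vecMulVec_self_star x

namespace PosSemidef

variable {X : Matrix ι ι ℝ}

theorem sq_apply_le_mul_diag (hX : X.PosSemidef) (i j : ι) : X i j ^ 2 ≤ X i i * X j j := by
  classical
  have hminor := (hX.submatrix ![i, j]).det_nonneg
  have hsymm : X j i = X i j := by simpa using hX.isHermitian.apply i j
  simp only [det_fin_two, submatrix_apply, Matrix.cons_val_zero, Matrix.cons_val_one, hsymm]
    at hminor
  nlinarith

theorem apply_le_sqrt_mul_sqrt (hX : X.PosSemidef) (i j : ι) : X i j ≤ √(X i i) * √(X j j) := by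
  rw [← Real.sqrt_mul hX.diag_nonneg]
  exact (le_abs_self _).trans (Real.abs_le_sqrt (hX.sq_apply_le_mul_diag i j))

theorem sqrt_diag_dotProduct_mulVec_le_trace_mul [Fintype ι] (hX : X.PosSemidef)
    {Q : Matrix ι ι ℝ} (hQ : ∀ i j, i ≠ j → Q i j ≤ 0) :
    (fun i => √(X i i)) ⬝ᵥ Q *ᵥ (fun i => √(X i i)) ≤ (Q * X).trace := by
  simp only [dotProduct, mulVec, trace, diag, mul_apply, Finset.mul_sum]
  refine Finset.sum_le_sum fun i _ => Finset.sum_le_sum fun j _ => ?_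
  rcases eq_or_ne i j with rfl | hij
  · rw [mul_left_comm, ← mul_assoc, mul_assoc, Real.mul_self_sqrt hX.diag_nonneg]
  · calc √(X i i) * (Q i j * √(X j j)) = Q i j * (√(X j j) * √(X i i)) := by ring
      _ ≤ Q i j * X j i :=
        mul_le_mul_of_nonpos_left (hX.apply_le_sqrt_mul_sqrt j i) (hQ i j hij)

end PosSemidef

end Matrix

section QCQP

variable {n m : ℕ} {Q : Fin m → Matrix (Fin n) (Fin n) ℝ} {b : Fin m → ℝ}

theorem primalFeasible_vecMulVec_iff {x : Fin n → ℝ} :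
    PrimalFeasible Q b (vecMulVec x x) ↔ ∀ p, x ⬝ᵥ Q p *ᵥ x ≤ b p := by
  simp only [PrimalFeasible, trace_mul_vecMulVec_self, posSemidef_vecMulVec_self, true_and]

theorem PrimalFeasible.sqrt_diag_feasible {X : Matrix (Fin n) (Fin n) ℝ}
    (hX : PrimalFeasible Q b X) (hQ : ∀ p, ∀ i j, i ≠ j → Q p i j ≤ 0) (p : Fin m) :
    (fun i => √(X i i)) ⬝ᵥ Q p *ᵥ (fun i => √(X i i)) ≤ b p :=
  (hX.1.sqrt_diag_dotProduct_mulVec_le_trace_mul (hQ p)).trans (hX.2 p)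

end QCQP

theorem sdp_exact_of_nonpos_offdiag_general (n m : ℕ)
    (Q0 : Matrix (Fin n) (Fin n) ℝ) (Q : Fin m → Matrix (Fin n) (Fin n) ℝ) (b : Fin m → ℝ)
    (hQ0offdiag : ∀ i j, i ≠ j → Q0 i j ≤ 0)
    (hQoffdiag : ∀ p, ∀ i j, i ≠ j → Q p i j ≤ 0) :
    ∀ X, PrimalOptimal Q0 Q b X →
      (Q0 * X).trace =
        sInf {v : ℝ | ∃ x : Fin n → ℝ,
          (∀ p, x ⬝ᵥ (Q p).mulVec x ≤ b p) ∧ v = x ⬝ᵥ Q0.mulVec x} := by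
  rintro X ⟨hXfeas, hXmin⟩
  set S := {v : ℝ | ∃ x : Fin n → ℝ,
    (∀ p, x ⬝ᵥ (Q p).mulVec x ≤ b p) ∧ v = x ⬝ᵥ Q0.mulVec x}
  have hlower : ∀ v ∈ S, (Q0 * X).trace ≤ v := by
    rintro _ ⟨x, hx, rfl⟩
    simpa only [trace_mul_vecMulVec_self] using hXmin _ (primalFeasible_vecMulVec_iff.2 hx)
  have hsqrt : (fun i => √(X i i)) ⬝ᵥ Q0 *ᵥ (fun i => √(X i i)) ∈ S :=
    ⟨_, hXfeas.sqrt_diag_feasible hQoffdiag, rfl⟩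
  exact le_antisymm (le_csInf ⟨_, hsqrt⟩ hlower)
    ((csInf_le ⟨_, hlower⟩ hsqrt).trans
      (hXfeas.1.sqrt_diag_dotProduct_mulVec_le_trace_mul hQ0offdiag))

/-- For a nonpositive off-diagonal QCQP with a connected aggregated sparsity
pattern graph and `Q^0` strictly negative on every edge, the SDP relaxation is
exact: the optimal value of (P) equals the infimum of the QCQP. -/
theorem sdp_exact_of_nonpos_offdiag (n m : ℕ) (hn : 0 < n) (hm : 0 < m)
    (Q0 : Matrix (Fin n) (Fin n) ℝ) (Q : Fin m → Matrix (Fin n) (Fin n) ℝ) (b : Fin m → ℝ)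
    (hQ0 : Q0.IsSymm) (hQ : ∀ p, (Q p).IsSymm)
    (hQ0offdiag : ∀ i j, i ≠ j → Q0 i j ≤ 0)
    (hQoffdiag : ∀ p, ∀ i j, i ≠ j → Q p i j ≤ 0)
    (hP : ∃ X, PrimalOptimal Q0 Q b X)
    (hD : ∃ y, DualOptimal Q0 Q b y)
    (hbdd : (∃ C : ℝ, ∀ X, PrimalFeasible Q b X → ∀ i j, |X i j| ≤ C) ∨
            (∃ C : ℝ, ∀ y, DualOptimal Q0 Q b y → ∀ p, |y p| ≤ C))
    (hconn : (aggSparsityGraph Q0 Q).Connected)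
    (hQ0neg : ∀ i j, (aggSparsityGraph Q0 Q).Adj i j → Q0 i j < 0) :
    ∀ X, PrimalOptimal Q0 Q b X →
      (Q0 * X).trace =
        sInf {v : ℝ | ∃ x : Fin n → ℝ,
          (∀ p, x ⬝ᵥ (Q p).mulVec x ≤ b p) ∧ v = x ⬝ᵥ Q0.mulVec x} :=
  sdp_exact_of_nonpos_offdiag_general n m Q0 Q b hQ0offdiag hQoffdiag
end

section
/- Let G be a simple graph on vertex set {1,…,n} equipped with a sign σ_{ij} ∈ {+1,−1} on each edge {i,j}. Define the simple graph Ḡ on vertex set {1,…,2n} whose edges are: {i,j} for every edge {i,j} of G with σ_{ij} = +1; {i, j+n} and {j, i+n} for every edge {i,j} of G with σ_{ij} = −1; and {i, i+n} for every i ∈ {1,…,n}. If every simple cycle C of G satisfies that the number of edges of C with sign −1 is congruent to the length |C| of C modulo 2, then Ḡ contains no odd cycle, i.e., Ḡ is bipartite. -/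
/-!
Weigh each edge of `G` in `ZMod 2`, positive edges by `1` and negative ones by `0`; the hypothesis
says exactly that every cycle has weight `0`. A closed walk reduces to the trivial walk by
repeatedly cutting off a cycle or a backtrack (which weighs `2 w(e) = 0`), so every closed walk
has weight `0`. Hence the weight of a walk from a fixed root of each component to `v` is a
potential `f v` with `f j = f i + w(ij)`. Colouring `i` by `f i` and `i + n` by `f i + 1` is then
proper: a positive edge joins two vertices of the same copy whose potentials differ, while a
negative edge and a rung `{i, i + n}` join vertices of equal potential in different copies.
-/

/-- The transformed graph `Ḡ` on the doubled vertex set `Fin n ⊕ Fin n`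
(the left copy playing the role of `{1,…,n}` and the right copy of `{n+1,…,2n}`):
positive edges `{i,j}` of `G` stay, each negative edge `{i,j}` of `G` is replaced
by `{i, j+n}` and `{j, i+n}`, and the edges `{i, i+n}` are added. -/
def doubledGraph {n : ℕ} (G : SimpleGraph (Fin n)) (σ : Fin n → Fin n → ℤ) :
    SimpleGraph (Fin n ⊕ Fin n) :=
  SimpleGraph.fromRel (fun a b =>
    match a, b with
    | Sum.inl i, Sum.inl j => G.Adj i j ∧ σ i j = 1
    | Sum.inl i, Sum.inr j => (G.Adj i j ∧ σ i j = -1) ∨ i = j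
    | Sum.inr _, _ => False)

namespace SimpleGraph

variable {V : Type*} {G : SimpleGraph V}

namespace Walk

variable (w : Sym2 V → ZMod 2)

def weight {u v : V} (p : G.Walk u v) : ZMod 2 := (p.edges.map w).sum

@[simp] lemma weight_nil {u : V} : (nil : G.Walk u u).weight w = 0 := rfl

@[simp] lemma weight_cons {u v x : V} (h : G.Adj u v) (p : G.Walk v x) :
    (cons h p).weight w = w s(u, v) + p.weight w := by
  simp [weight]

@[simp] lemma weight_append {u v x : V} (p : G.Walk u v) (q : G.Walk v x) :
    (p.append q).weight w = p.weight w + q.weight w := by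
  simp [weight]

@[simp] lemma weight_reverse {u v : V} (p : G.Walk u v) : p.reverse.weight w = p.weight w := by
  simp [weight, List.sum_reverse]

@[simp] lemma weight_copy {u v u' v' : V} (p : G.Walk u v) (hu : u = u') (hv : v = v') :
    (p.copy hu hv).weight w = p.weight w := by
  simp [weight]

@[simp] lemma weight_concat {u v x : V} (p : G.Walk u v) (h : G.Adj v x) :
    (p.concat h).weight w = p.weight w + w s(v, x) := by
  simp [concat_eq_append]

variable {w}

/-- Either `cons h p` is a cycle, or `p` is the single edge back to `u`. -/
lemma weight_cons_eq_zero_of_isPath (hcyc : ∀ u (c : G.Walk u u), c.IsCycle → c.weight w = 0)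
    {u v : V} (h : G.Adj u v) {p : G.Walk v u} (hp : p.IsPath) : (cons h p).weight w = 0 := by
  by_cases he : s(u, v) ∈ p.edges
  · have hlen : p.edges.length = 1 := by
      rw [length_edges]; exact hp.length_eq_one_of_mem_edges (Sym2.eq_swap ▸ he)
    obtain ⟨e, he'⟩ := List.length_eq_one_iff.mp hlen
    rw [he', List.mem_singleton] at he
    simp [weight, he', ← he, CharTwo.add_self_eq_zero]
  · exact hcyc u _ ((cons_isCycle_iff p h).mpr ⟨hp, he⟩)

lemma weight_bypass [DecidableEq V] (hcyc : ∀ u (c : G.Walk u u), c.IsCycle → c.weight w = 0)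
    {u v : V} (p : G.Walk u v) : p.bypass.weight w = p.weight w := by
  induction p with
  | nil => rfl
  | @cons u x v h p ih =>
    rw [bypass]
    split_ifs with hu
    · have hloop := weight_cons_eq_zero_of_isPath hcyc h ((bypass_isPath p).takeUntil hu)
      rw [weight_cons] at hloop
      have hsplit := congrArg (weight w) (p.bypass.take_spec hu)
      rw [weight_append] at hsplit
      rw [weight_cons, ← ih, ← hsplit, ← add_assoc, hloop, zero_add]
    · rw [weight_cons, weight_cons, ih]

theorem weight_eq_zero_of_forall_isCycle
    (hcyc : ∀ u (c : G.Walk u u), c.IsCycle → c.weight w = 0) (u : V) (p : G.Walk u u) :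
    p.weight w = 0 := by
  classical
  rw [← weight_bypass hcyc, (isPath_iff_nil.mp (bypass_isPath p)).eq_nil, weight_nil]

lemma weight_ite_eq_length_add_countP (P : Sym2 V → Prop) [DecidablePred P] {u v : V}
    (p : G.Walk u v) :
    p.weight (fun e => if P e then 0 else 1) =
      p.length + p.edges.countP (fun e => decide (P e)) := by
  induction p with
  | nil => simp
  | @cons x y _ h p ih =>
    rw [weight_cons, ih, edges_cons, List.countP_cons, length_cons]
    by_cases hP : P s(x, y) <;> simp [hP] <;> grind

lemma weight_eq_of_forall_weight_eq_zero (hw : ∀ u (p : G.Walk u u), p.weight w = 0) {u v : V}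
    (p q : G.Walk u v) : p.weight w = q.weight w := by
  simpa [CharTwo.add_eq_zero] using hw u (p.append q.reverse)

end Walk

theorem exists_potential_of_forall_weight_eq_zero {w : Sym2 V → ZMod 2}
    (hw : ∀ u (p : G.Walk u u), p.weight w = 0) :
    ∃ f : V → ZMod 2, ∀ ⦃i j⦄, G.Adj i j → f j = f i + w s(i, j) := by
  have hroot (v : V) : G.Reachable (G.connectedComponentMk v).out v :=
    ConnectedComponent.exact (Quot.out_eq _)
  refine ⟨fun v => (hroot v).some.weight w, fun i j hij => ?_⟩
  have hr : (G.connectedComponentMk i).out = (G.connectedComponentMk j).out :=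
    congrArg Quot.out (ConnectedComponent.sound hij.reachable)
  dsimp only
  rw [Walk.weight_eq_of_forall_weight_eq_zero hw _ (((hroot i).some.concat hij).copy hr rfl)]
  simp

end SimpleGraph

lemma doubledGraph_colorable_of_potential {n : ℕ} {G : SimpleGraph (Fin n)}
    {σ : Fin n → Fin n → ℤ} (f : Fin n → ZMod 2)
    (hpos : ∀ i j, G.Adj i j → σ i j = 1 → f j = f i + 1)
    (hneg : ∀ i j, G.Adj i j → σ i j = -1 → f j = f i) :
    (doubledGraph G σ).Colorable 2 := by
  have hc : (doubledGraph G σ).Coloring (ZMod 2) :=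
    SimpleGraph.Coloring.mk (Sum.elim f (f · + 1)) <| by
      rintro (i | i) (j | j) ⟨-, hrel⟩ <;> grind
  simpa using hc.colorable

theorem doubledGraph_bipartite_general (n : ℕ) (G : SimpleGraph (Fin n))
    (σ : Fin n → Fin n → ℤ)
    (hσsymm : ∀ i j, σ i j = σ j i)
    (hcycles : ∀ (u : Fin n) (w : G.Walk u u), w.IsCycle →
      (w.edges.countP fun e => decide (Sym2.lift ⟨σ, hσsymm⟩ e = -1)) % 2
        = w.length % 2) :
    (doubledGraph G σ).Colorable 2 := by
  let w : Sym2 (Fin n) → ZMod 2 := fun e => if Sym2.lift ⟨σ, hσsymm⟩ e = -1 then 0 else 1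
  have hcyc (u : Fin n) (c : G.Walk u u) (hc : c.IsCycle) : c.weight w = 0 := by
    have hparity := (ZMod.natCast_eq_natCast_iff' _ _ 2).mpr (hcycles u c hc)
    rw [SimpleGraph.Walk.weight_ite_eq_length_add_countP, hparity, CharTwo.add_self_eq_zero]
  obtain ⟨f, hf⟩ := SimpleGraph.exists_potential_of_forall_weight_eq_zero
    (SimpleGraph.Walk.weight_eq_zero_of_forall_isCycle hcyc)
  exact doubledGraph_colorable_of_potential f (fun i j hij hs => by simp [hf hij, w, hs])
    (fun i j hij hs => by simp [hf hij, w, hs])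

/-- If in every simple cycle of the signed graph `G` the number of negative edges is
congruent to the cycle length modulo 2, then the transformed graph `Ḡ` is
bipartite (2-colorable, i.e., contains no odd cycle). -/
theorem doubledGraph_bipartite (n : ℕ) (G : SimpleGraph (Fin n))
    (σ : Fin n → Fin n → ℤ)
    (hσsymm : ∀ i j, σ i j = σ j i)
    (hσval : ∀ i j, G.Adj i j → σ i j = 1 ∨ σ i j = -1)
    (hcycles : ∀ (u : Fin n) (w : G.Walk u u), w.IsCycle →
      (w.edges.countP fun e => decide (Sym2.lift ⟨σ, hσsymm⟩ e = -1)) % 2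
        = w.length % 2) :
    (doubledGraph G σ).Colorable 2 :=
  doubledGraph_bipartite_general n G σ hσsymm hcycles
end

section
/- Let Q^1, …, Q^m be real symmetric n×n matrices and b ∈ R^m. If there exists ȳ ∈ R^m with ȳ ≥ 0 componentwise such that Σ_{p=1}^m ȳ_p Q^p is positive definite, then the feasible set of (P), namely {X : X is a real symmetric positive semidefinite n×n matrix and trace(Q^p X) ≤ b_p for p = 1,…,m}, is a bounded set of matrices. -/
/-!
Put `A = ∑ ȳ_p Q^p`. Since `A ≻ 0` there is `ε > 0` with `A ⪰ ε • 1`, and as the trace pairing of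
two positive semidefinite matrices is nonnegative, every feasible `X` satisfies
`ε tr X ≤ tr (A X) = ∑ ȳ_p tr (Q^p X) ≤ ∑ ȳ_p b_p`.
Finally the entries of a positive semidefinite matrix are bounded by its trace,
because `2 |X i j| ≤ X i i + X j j`.
-/

open Matrix
open scoped MatrixOrder

namespace Matrix

variable {ι : Type*} [Fintype ι]

lemma PosSemidef.trace_mul_nonneg {A B : Matrix ι ι ℝ} (hA : A.PosSemidef) (hB : B.PosSemidef) :
    0 ≤ (A * B).trace := by
  classical
  obtain ⟨C, rfl⟩ := CStarAlgebra.nonneg_iff_eq_star_mul_self.mp hB.nonneg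
  rw [star_eq_conjTranspose, ← mul_assoc, trace_mul_comm, ← mul_assoc]
  exact (hA.mul_mul_conjTranspose_same C).trace_nonneg

lemma PosSemidef.two_mul_abs_apply_le {X : Matrix ι ι ℝ} (hX : X.PosSemidef) (i j : ι) :
    2 * |X i j| ≤ X i i + X j j := by
  classical
  have hsymm : X j i = X i j := hX.isHermitian.apply i j
  have hplus := hX.dotProduct_mulVec_nonneg (Pi.single i 1 + Pi.single j 1)
  have hminus := hX.dotProduct_mulVec_nonneg (Pi.single i 1 - Pi.single j 1)
  simp only [star_trivial, mulVec_add, mulVec_sub, mulVec_single, MulOpposite.op_one, one_smul,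
    dotProduct_add, dotProduct_sub, add_dotProduct, sub_dotProduct, single_dotProduct, col_apply,
    one_mul, sub_nonneg, tsub_le_iff_right] at hplus hminus
  cases abs_cases (X i j) <;> linarith

lemma PosSemidef.abs_apply_le_trace {X : Matrix ι ι ℝ} (hX : X.PosSemidef) (i j : ι) :
    |X i j| ≤ X.trace := by
  have hdiag (k : ι) : X k k ≤ X.trace :=
    Finset.single_le_sum (fun l _ ↦ hX.diag_nonneg (i := l)) (Finset.mem_univ k)
  linarith [hX.two_mul_abs_apply_le i j, hdiag i, hdiag j]

lemma PosDef.exists_pos_mul_trace_le_trace_mul [DecidableEq ι] {A : Matrix ι ι ℝ}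
    (hA : A.PosDef) : ∃ ε > 0, ∀ X : Matrix ι ι ℝ, X.PosSemidef → ε * X.trace ≤ (A * X).trace := by
  cases isEmpty_or_nonempty ι
  · exact ⟨1, one_pos, fun X _ ↦ by simp [trace]⟩
  -- the spectrum of `A` is a compact set of positive reals, hence bounded below by some `ε > 0`
  obtain ⟨ε, hε, hεA⟩ := (CFC.exists_pos_algebraMap_le_iff hA.1.isSelfAdjoint).mpr <|
    (StarOrderedRing.isStrictlyPositive_iff_spectrum_pos A).mp hA.isStrictlyPositive
  refine ⟨ε, hε, fun X hX ↦ ?_⟩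
  have := (le_iff.mp hεA).trace_mul_nonneg hX
  rwa [Algebra.algebraMap_eq_smul_one, sub_mul, trace_sub, smul_mul_assoc, one_mul, trace_smul,
    smul_eq_mul, sub_nonneg] at this

end Matrix

theorem primal_feasible_bounded_general (n m : ℕ)
    (Q : Fin m → Matrix (Fin n) (Fin n) ℝ) (b : Fin m → ℝ)
    (ybar : Fin m → ℝ) (hybar : ∀ p, 0 ≤ ybar p)
    (hpd : (∑ p, ybar p • Q p).PosDef) :
    ∃ C : ℝ, ∀ X : Matrix (Fin n) (Fin n) ℝ,
      X.PosSemidef → (∀ p, (Q p * X).trace ≤ b p) → ∀ i j, |X i j| ≤ C := by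
  obtain ⟨ε, hε, hcoercive⟩ := hpd.exists_pos_mul_trace_le_trace_mul
  refine ⟨(∑ p, ybar p * b p) / ε, fun X hX hfeas i j ↦ ?_⟩
  have hweighted : ((∑ p, ybar p • Q p) * X).trace ≤ ∑ p, ybar p * b p := by
    simp only [Finset.sum_mul, trace_sum, smul_mul_assoc, trace_smul, smul_eq_mul]
    gcongr with p
    exacts [hybar p, hfeas p]
  calc |X i j| ≤ X.trace := hX.abs_apply_le_trace i j
    _ ≤ (∑ p, ybar p * b p) / ε := by
      rw [le_div_iff₀ hε, mul_comm]
      exact (hcoercive X hX).trans hweighted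

/-- If `ȳ ≥ 0` satisfies `Σ_p ȳ_p Q^p ≻ 0`, then the feasible set of the primal
SDP (P) is bounded. -/
theorem primal_feasible_bounded (n m : ℕ)
    (Q : Fin m → Matrix (Fin n) (Fin n) ℝ) (b : Fin m → ℝ)
    (hQ : ∀ p, (Q p).IsSymm)
    (ybar : Fin m → ℝ) (hybar : ∀ p, 0 ≤ ybar p)
    (hpd : (∑ p, ybar p • Q p).PosDef) :
    ∃ C : ℝ, ∀ X : Matrix (Fin n) (Fin n) ℝ,
      X.PosSemidef → (∀ p, (Q p * X).trace ≤ b p) → ∀ i j, |X i j| ≤ C :=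
  primal_feasible_bounded_general n m Q b ybar hybar hpd
end

section
/- Let X be feasible for (P) and y be feasible for (D), and suppose their objective values coincide: trace(Q^0 X) = −b·y. Then complementary slackness holds: X · S(y) = O (the zero n×n matrix). -/
/-!
Feasibility of `X` and `y ≥ 0` give `trace (S(y) X) ≤ trace (Q⁰ X) + b ⬝ y = 0` (weak duality).
Writing `X = T²` and `S(y) = R²` with `T, R` the positive square roots,
`trace (X S(y)) = trace ((T R)ᴴ (T R)) ≥ 0`. Hence `T R = 0`, and `X S(y) = T (T R) R = 0`.
-/

open Matrix
open scoped MatrixOrder ComplexOrder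

namespace Matrix.PosSemidef

variable {n 𝕜 : Type*} [Fintype n] [DecidableEq n] [RCLike 𝕜] {A B : Matrix n n 𝕜}

lemma trace_mul_eq_trace_conjTranspose_mul_self (hA : A.PosSemidef) (hB : B.PosSemidef) :
    (A * B).trace = ((CFC.sqrt A * CFC.sqrt B)ᴴ * (CFC.sqrt A * CFC.sqrt B)).trace := by
  have hsqrtA := (CFC.sqrt_nonneg A).posSemidef.isHermitian
  have hsqrtB := (CFC.sqrt_nonneg B).posSemidef.isHermitian
  conv_lhs => rw [← CFC.sqrt_mul_sqrt_self A hA.nonneg, ← CFC.sqrt_mul_sqrt_self B hB.nonneg]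
  rw [conjTranspose_mul, hsqrtA.eq, hsqrtB.eq, ← Matrix.mul_assoc, trace_mul_comm]
  simp only [Matrix.mul_assoc]

lemma trace_mul_nonneg_s9 (hA : A.PosSemidef) (hB : B.PosSemidef) : 0 ≤ (A * B).trace := by
  rw [hA.trace_mul_eq_trace_conjTranspose_mul_self hB]
  exact (posSemidef_conjTranspose_mul_self _).trace_nonneg

lemma trace_mul_eq_zero_iff (hA : A.PosSemidef) (hB : B.PosSemidef) :
    (A * B).trace = 0 ↔ A * B = 0 := by
  refine ⟨fun h => ?_, fun h => by rw [h, trace_zero]⟩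
  rw [hA.trace_mul_eq_trace_conjTranspose_mul_self hB,
    trace_conjTranspose_mul_self_eq_zero_iff] at h
  rw [← CFC.sqrt_mul_sqrt_self A hA.nonneg, ← CFC.sqrt_mul_sqrt_self B hB.nonneg,
    Matrix.mul_assoc, ← Matrix.mul_assoc (CFC.sqrt A) (CFC.sqrt B), h, Matrix.zero_mul,
    Matrix.mul_zero]

end Matrix.PosSemidef

lemma trace_add_sum_smul_mul_le {n ι R : Type*} [Fintype n] [Fintype ι] [CommRing R]
    [PartialOrder R] [IsOrderedRing R] (Q0 X : Matrix n n R) (Q : ι → Matrix n n R)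
    (b y : ι → R) (hX : ∀ p, (Q p * X).trace ≤ b p) (hy : ∀ p, 0 ≤ y p) :
    ((Q0 + ∑ p, y p • Q p) * X).trace ≤ (Q0 * X).trace + b ⬝ᵥ y := by
  rw [Matrix.add_mul, trace_add, Finset.sum_mul, trace_sum, dotProduct]
  gcongr with p
  rw [smul_mul, trace_smul, smul_eq_mul, mul_comm (b p)]
  exact mul_le_mul_of_nonneg_left (hX p) (hy p)

theorem complementary_slackness_general (n m : ℕ)
    (Q0 : Matrix (Fin n) (Fin n) ℝ) (Q : Fin m → Matrix (Fin n) (Fin n) ℝ) (b : Fin m → ℝ)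
    (X : Matrix (Fin n) (Fin n) ℝ) (hXpsd : X.PosSemidef)
    (hXfeas : ∀ p, (Q p * X).trace ≤ b p)
    (y : Fin m → ℝ) (hy : ∀ p, 0 ≤ y p)
    (hS : (Q0 + ∑ p, y p • Q p).PosSemidef)
    (heq : (Q0 * X).trace = -(b ⬝ᵥ y)) :
    X * (Q0 + ∑ p, y p • Q p) = 0 := by
  have hgap := trace_add_sum_smul_mul_le Q0 X Q b y hXfeas hy
  rw [heq, neg_add_cancel, trace_mul_comm] at hgap
  exact (hXpsd.trace_mul_eq_zero_iff hS).mp (hgap.antisymm (hXpsd.trace_mul_nonneg_s9 hS))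

/-- Complementary slackness: if `X` is feasible for (P), `y` is feasible for (D), and
their objective values coincide, then `X · S(y) = O`. -/
theorem complementary_slackness (n m : ℕ)
    (Q0 : Matrix (Fin n) (Fin n) ℝ) (Q : Fin m → Matrix (Fin n) (Fin n) ℝ) (b : Fin m → ℝ)
    (hQ0 : Q0.IsSymm) (hQ : ∀ p, (Q p).IsSymm)
    (X : Matrix (Fin n) (Fin n) ℝ) (hXpsd : X.PosSemidef)
    (hXfeas : ∀ p, (Q p * X).trace ≤ b p)
    (y : Fin m → ℝ) (hy : ∀ p, 0 ≤ y p)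
    (hS : (Q0 + ∑ p, y p • Q p).PosSemidef)
    (heq : (Q0 * X).trace = -(b ⬝ᵥ y)) :
    X * (Q0 + ∑ p, y p • Q p) = 0 :=
  complementary_slackness_general n m Q0 Q b X hXpsd hXfeas y hy hS heq
end

section
/- Let Q be a real symmetric n×n matrix and δ > 0. Define the real symmetric n×n matrices D, N_+, N_− by: D is diagonal with D_{ii} = Q_{ii} + 2δ; for i ≠ j, (N_+)_{ij} = Q_{ij}/2 if Q_{ij} > 0 and (N_+)_{ij} = 0 otherwise, with (N_+)_{ii} = 0; for i ≠ j, (N_−)_{ij} = −Q_{ij}/2 if Q_{ij} < 0 and (N_−)_{ij} = 0 otherwise, with (N_−)_{ii} = δ. Then Q = D + 2N_+ − 2N_−, the matrices N_+ and N_− have all entries nonnegative, and for every x ∈ R^n, setting z = −x, the quadratic form identity xᵀQx = [x; z]ᵀ [[D + 2N_+, N_−]; [N_−, O]] [x; z] holds, where [[D + 2N_+, N_−]; [N_−, O]] is the symmetric 2n×2n block matrix with upper-left block D + 2N_+, upper-right and lower-left blocks N_−, and lower-right block the zero matrix. -/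
open Matrix

section QuadraticForm

variable {m R : Type*} [Fintype m] [CommRing R]

theorem sumElim_neg_dotProduct_fromBlocks_zero_mulVec (A B C : Matrix m m R) (x : m → R) :
    Sum.elim x (-x) ⬝ᵥ (fromBlocks A B C 0) *ᵥ Sum.elim x (-x) = x ⬝ᵥ (A - B - C) *ᵥ x := by
  rw [fromBlocks_mulVec, sumElim_dotProduct_sumElim, Sum.elim_comp_inl, Sum.elim_comp_inr,
    sub_mulVec, sub_mulVec, zero_mulVec, add_zero, mulVec_neg, dotProduct_add,
    dotProduct_neg, neg_dotProduct, dotProduct_sub, dotProduct_sub]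
  ring

end QuadraticForm

section Decomposition

variable {m 𝕜 : Type*} [DecidableEq m] [Field 𝕜] [LinearOrder 𝕜] [IsStrictOrderedRing 𝕜]
  {Q D Np Nm : Matrix m m 𝕜} {δ : 𝕜}

theorem eq_diag_add_two_nsmul_pos_sub_two_nsmul_neg
    (hD : ∀ i j, D i j = if i = j then Q i i + 2 * δ else 0)
    (hNp : ∀ i j, Np i j = if i ≠ j ∧ 0 < Q i j then Q i j / 2 else 0)
    (hNm : ∀ i j, Nm i j = if i = j then δ else if Q i j < 0 then -Q i j / 2 else 0) :
    Q = D + 2 • Np - 2 • Nm := by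
  ext i j
  simp only [Matrix.sub_apply, Matrix.add_apply, two_nsmul, hD, hNp, hNm]
  rcases eq_or_ne i j with rfl | hij
  · simp only [if_true, not_true_eq_false, ne_eq, false_and, if_false]
    ring
  · simp only [hij, if_false, ne_eq, not_false_eq_true, true_and]
    rcases lt_trichotomy (Q i j) 0 with hneg | hzero | hpos
    · simp [hneg, hneg.not_gt]
    · simp [hzero]
    · simp [hpos, hpos.not_gt]

theorem pos_part_nonneg (hNp : ∀ i j, Np i j = if i ≠ j ∧ 0 < Q i j then Q i j / 2 else 0)
    (i j : m) : 0 ≤ Np i j := by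
  rw [hNp]
  split_ifs with h
  · exact (half_pos h.2).le
  · exact le_rfl

theorem neg_part_nonneg (hδ : 0 < δ)
    (hNm : ∀ i j, Nm i j = if i = j then δ else if Q i j < 0 then -Q i j / 2 else 0)
    (i j : m) : 0 ≤ Nm i j := by
  rw [hNm]
  split_ifs with _ hneg
  · exact hδ.le
  · exact (half_pos (neg_pos.mpr hneg)).le
  · exact le_rfl

end Decomposition

theorem bipartite_decomposition_general (n : ℕ) (Q : Matrix (Fin n) (Fin n) ℝ)
    (δ : ℝ) (hδ : 0 < δ)
    (D Np Nm : Matrix (Fin n) (Fin n) ℝ)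
    (hD : ∀ i j, D i j = if i = j then Q i i + 2 * δ else 0)
    (hNp : ∀ i j, Np i j = if i ≠ j ∧ 0 < Q i j then Q i j / 2 else 0)
    (hNm : ∀ i j, Nm i j = if i = j then δ else if Q i j < 0 then -Q i j / 2 else 0) :
    Q = D + 2 • Np - 2 • Nm ∧
    (∀ i j, 0 ≤ Np i j) ∧ (∀ i j, 0 ≤ Nm i j) ∧
    ∀ x : Fin n → ℝ,
      Sum.elim x (-x) ⬝ᵥ
          (Matrix.fromBlocks (D + 2 • Np) Nm Nm (0 : Matrix (Fin n) (Fin n) ℝ)).mulVec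
            (Sum.elim x (-x))
        = x ⬝ᵥ Q.mulVec x := by
  have hQ : Q = D + 2 • Np - 2 • Nm := eq_diag_add_two_nsmul_pos_sub_two_nsmul_neg hD hNp hNm
  refine ⟨hQ, pos_part_nonneg hNp, neg_part_nonneg hδ hNm, fun x => ?_⟩
  rw [sumElim_neg_dotProduct_fromBlocks_zero_mulVec, sub_sub, ← two_nsmul, ← hQ]

/-- Decomposition `Q = D + 2N₊ − 2N₋` of a symmetric matrix into a diagonal part and
nonnegative off-diagonal parts, together with the quadratic-form identity
`xᵀQx = [x; z]ᵀ [[D + 2N₊, N₋]; [N₋, O]] [x; z]` for `z = −x`. -/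
theorem bipartite_decomposition (n : ℕ) (Q : Matrix (Fin n) (Fin n) ℝ)
    (hQ : Q.IsSymm) (δ : ℝ) (hδ : 0 < δ)
    (D Np Nm : Matrix (Fin n) (Fin n) ℝ)
    (hD : ∀ i j, D i j = if i = j then Q i i + 2 * δ else 0)
    (hNp : ∀ i j, Np i j = if i ≠ j ∧ 0 < Q i j then Q i j / 2 else 0)
    (hNm : ∀ i j, Nm i j = if i = j then δ else if Q i j < 0 then -Q i j / 2 else 0) :
    Q = D + 2 • Np - 2 • Nm ∧
    (∀ i j, 0 ≤ Np i j) ∧ (∀ i j, 0 ≤ Nm i j) ∧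
    ∀ x : Fin n → ℝ,
      Sum.elim x (-x) ⬝ᵥ
          (Matrix.fromBlocks (D + 2 • Np) Nm Nm (0 : Matrix (Fin n) (Fin n) ℝ)).mulVec
            (Sum.elim x (-x))
        = x ⬝ᵥ Q.mulVec x :=
  bipartite_decomposition_general n Q δ hδ D Np Nm hD hNp hNm
end
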